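/- For each n ∈ ℕ let A_n be a symmetric (0,2)-tensor field on P_n, and assume that for every n ∈ ℕ and each scalar patched Markov embedding G_n : P_n → P_{n+1}, the pullback of A_{n+1} by G_n equals A_n. Then for all n ∈ ℕ and all distinct i, j ∈ Ω_{n+1}, the two quantities A_n(Z_i^n, Z_i^n)_{b_n} / (n(n+1)) and −A_n(Z_i^n, Z_j^n)_{b_n} / (n+1) coincide, and this common quantity is independent of n ∈ ℕ and of i, j ∈ Ω_{n+1}. -/

import Mathlib

open Finset

noncomputable section

/-- `Psim n` is the space `P_n` of positive probability measures on
`Ω_{n+1} = {1,…,n+1}`, viewed as a subset of `ℝ^{n+1}`. -/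
def Psim (n : ℕ) : Set (Fin (n + 1) → ℝ) :=
  {p | (∀ i, p i ∈ Set.Ioo (0 : ℝ) 1) ∧ ∑ i, p i = 1}

/-- The tangent space of `P_n` (at any point): vectors in `ℝ^{n+1}` whose
coordinates sum to zero. -/
def Tang (n : ℕ) : Set (Fin (n + 1) → ℝ) :=
  {X | ∑ i, X i = 0}

/-- `B` is a symmetric bilinear form on `ℝ^{n+1}` (the value of a symmetric
`(0,2)`-tensor field at a point). -/
def IsSymmBilin {n : ℕ} (B : (Fin (n + 1) → ℝ) → (Fin (n + 1) → ℝ) → ℝ) : Prop :=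
  (∀ X Y, B X Y = B Y X) ∧
  (∀ (c : ℝ) (X X' Y : Fin (n + 1) → ℝ), B (c • X + X') Y = c * B X Y + B X' Y)

/-- `A` is a family of symmetric `(0,2)`-tensor fields `A_n` on `P_n`
(indices `n ≥ 1`, matching the paper's `ℕ = {1,2,…}`). -/
def SymmTF (A : (n : ℕ) → (Fin (n + 1) → ℝ) → (Fin (n + 1) → ℝ) → (Fin (n + 1) → ℝ) → ℝ) :
    Prop :=
  ∀ n : ℕ, 0 < n → ∀ p ∈ Psim n, IsSymmBilin (A n p)

/-- The scalar patched Markov embedding `G_n^{α,σ} : P_n → P_{n+1}`,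
`G_n^{α,σ}(p) = α ∑_{i ∈ Ω_{n+1}} p(i) δ_{σ(i)} + (1-α) δ_{σ(n+2)}`. -/
def sPatch (n : ℕ) (α : ℝ) (σ : Equiv.Perm (Fin (n + 2))) (p : Fin (n + 1) → ℝ) :
    Fin (n + 2) → ℝ := fun I =>
  α * ∑ i : Fin (n + 1), p i * (if σ i.castSucc = I then 1 else 0) +
    (1 - α) * (if σ (Fin.last (n + 1)) = I then 1 else 0)

/-- The differential of `G_n^{α,σ}`: `dG(X) = α ∑_i X^i δ_{σ(i)}`. -/
def sPatchD (n : ℕ) (α : ℝ) (σ : Equiv.Perm (Fin (n + 2))) (X : Fin (n + 1) → ℝ) :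
    Fin (n + 2) → ℝ := fun I =>
  α * ∑ i : Fin (n + 1), X i * (if σ i.castSucc = I then 1 else 0)

/-- A general patched Markov embedding `G_n : P_n → P_{n+1}` with weights `a_i`:
`G_n(p) = ∑_i p(i) (a_i δ_{σ(i)} + (1-a_i) δ_{σ(n+2)})`. -/
def patch (n : ℕ) (a : Fin (n + 1) → ℝ) (σ : Equiv.Perm (Fin (n + 2)))
    (p : Fin (n + 1) → ℝ) : Fin (n + 2) → ℝ := fun I =>
  ∑ i : Fin (n + 1), p i * (a i * (if σ i.castSucc = I then 1 else 0) +
    (1 - a i) * (if σ (Fin.last (n + 1)) = I then 1 else 0))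

/-- The differential of a patched Markov embedding. -/
def patchD (n : ℕ) (a : Fin (n + 1) → ℝ) (σ : Equiv.Perm (Fin (n + 2)))
    (X : Fin (n + 1) → ℝ) : Fin (n + 2) → ℝ := fun I =>
  ∑ i : Fin (n + 1), X i * (a i * (if σ i.castSucc = I then 1 else 0) +
    (1 - a i) * (if σ (Fin.last (n + 1)) = I then 1 else 0))

/-- Invariance of the family `{A_n}` under scalar patched Markov embeddings:
the pullback of `A_{n+1}` by each `G_n^{α,σ}` equals `A_n`. -/
def InvariantSP
    (A : (n : ℕ) → (Fin (n + 1) → ℝ) → (Fin (n + 1) → ℝ) → (Fin (n + 1) → ℝ) → ℝ) : Prop :=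
  ∀ n : ℕ, 0 < n → ∀ α ∈ Set.Ioo (0 : ℝ) 1, ∀ σ : Equiv.Perm (Fin (n + 2)),
    ∀ p ∈ Psim n, ∀ X ∈ Tang n, ∀ Y ∈ Tang n,
      A (n + 1) (sPatch n α σ p) (sPatchD n α σ X) (sPatchD n α σ Y) = A n p X Y

/-- The vector field `Z_i^n` on `P_n`, with (constant) coordinates
`e_i - (1/(n+1)) ∑_j e_j`. -/
def Zvec (n : ℕ) (i : Fin (n + 1)) : Fin (n + 1) → ℝ :=
  fun k => (if k = i then 1 else 0) - 1 / (n + 1)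

/-- The uniform probability measure `b_n ∈ P_n`. -/
def bunif (n : ℕ) : Fin (n + 1) → ℝ := fun _ => 1 / (n + 1)

/-- The point `p_u ∈ P_1`: `p_u(1) = u`, `p_u(2) = 1 - u`. -/
def pu (u : ℝ) : Fin 2 → ℝ := ![u, 1 - u]

/-- The tensor field `A_n^d(X,Y)_p = ∑_i X^i Y^i / p(i)²`. -/
def Ad (n : ℕ) (p X Y : Fin (n + 1) → ℝ) : ℝ := ∑ i, X i * Y i / (p i) ^ 2

/-- The tensor field `A_n^s(X,Y)_p = (∑_i X^i/p(i)) (∑_j Y^j/p(j))`. -/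
def As (n : ℕ) (p X Y : Fin (n + 1) → ℝ) : ℝ := (∑ i, X i / p i) * (∑ j, Y j / p j)

/-- The Fisher metric `g_n^F(X,Y)_p = ∑_i X^i Y^i / p(i)`. -/
def Fish (n : ℕ) (p X Y : Fin (n + 1) → ℝ) : ℝ := ∑ i, X i * Y i / p i

/-- The point `ψ_u^σ(α) = G_1^{α,σ}(p_u) ∈ P_2` (the indices `1,2,3` of `Ω_3`
are `0,1,2 : Fin 3`). -/
def psiPt (α u : ℝ) (σ : Equiv.Perm (Fin 3)) : Fin 3 → ℝ := sPatch 1 α σ (pu u)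

/-- `E^k ⊂ TP_2`: the line spanned by `Z_i^2 - Z_j^2 = e_i - e_j` where
`{i,j,k} = {0,1,2}`; equivalently, the sum-zero vectors vanishing at `k`. -/
def Esub (k : Fin 3) : Set (Fin 3 → ℝ) := {W | (∑ i, W i = 0) ∧ W k = 0}

/-- `u_α^{ij}` (formed with `σ = id`). -/
def uRatio (α u : ℝ) (i j : Fin 3) : ℝ :=
  psiPt α u (Equiv.refl (Fin 3)) i /
    (psiPt α u (Equiv.refl (Fin 3)) i + psiPt α u (Equiv.refl (Fin 3)) j)

/-- The image `dH^{ij}_q(Z_1^1) = ((q(i)+q(j))/2) (Z_i^2 - Z_j^2)` of `Z_1^1`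
under the differential of `H_q^{ij} : P_1 → P_2`. -/
def dHvec (q : Fin 3 → ℝ) (i j : Fin 3) : Fin 3 → ℝ :=
  ((q i + q j) / 2) • (Zvec 2 i - Zvec 2 j)

/-- Condition (C1) for `A_2`. -/
def CondC1 (A2 : (Fin 3 → ℝ) → (Fin 3 → ℝ) → (Fin 3 → ℝ) → ℝ) : Prop :=
  ∃ r : ℝ → ℝ, (∀ t : ℝ, 0 < t → 0 < r t) ∧ (∀ t : ℝ, 0 < t → r t * r (1 / t) = 1) ∧
    ∀ α ∈ Set.Ioo (0 : ℝ) 1, ∀ u ∈ Set.Ioo (0 : ℝ) 1, ∀ σ : Equiv.Perm (Fin 3),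
      ∀ W1 W2 W3 : Fin 3 → ℝ, W1 ∈ Esub (σ 0) → W2 ∈ Esub (σ 1) → W3 ∈ Esub (σ 2) →
        W3 = W1 + W2 →
        A2 (psiPt α u σ) W3 W1 = r (u / (1 - u)) * A2 (psiPt α u σ) W3 W2

/-- Condition (C2) for `A_1` and `A_2`: `A_1` is positive semidefinite and
degenerate at `b_1`, and the parallelism identity holds. -/
def CondC2 (A1 : (Fin 2 → ℝ) → (Fin 2 → ℝ) → (Fin 2 → ℝ) → ℝ)
    (A2 : (Fin 3 → ℝ) → (Fin 3 → ℝ) → (Fin 3 → ℝ) → ℝ) : Prop :=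
  (∀ p ∈ Psim 1, ∀ X ∈ Tang 1, 0 ≤ A1 p X X) ∧
  (∃ X ∈ Tang 1, X ≠ 0 ∧ ∀ Y ∈ Tang 1, A1 (bunif 1) X Y = 0) ∧
  (∀ α ∈ Set.Ioo (0 : ℝ) 1, ∀ u ∈ Set.Ioo (0 : ℝ) 1, ∀ σ : Equiv.Perm (Fin 3),
    ∀ i j k l : Fin 3, i ≠ j → k ≠ l →
      A2 (psiPt α u σ) (dHvec (psiPt α u σ) (σ i) (σ j)) (dHvec (psiPt α u σ) (σ k) (σ l)) =
        (Real.sign (2 * uRatio α u i j - 1) *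
            Real.sqrt (A1 (pu (uRatio α u i j)) (Zvec 1 0) (Zvec 1 0))) *
        (Real.sign (2 * uRatio α u k l - 1) *
            Real.sqrt (A1 (pu (uRatio α u k l)) (Zvec 1 0) (Zvec 1 0))))

/-- `H : P_m → P_n` (together with its linear differential `dH`) is a
composition of scalar patched Markov embeddings. -/
inductive IsSPMComp :
    (m n : ℕ) → ((Fin (m + 1) → ℝ) → (Fin (n + 1) → ℝ)) →
      ((Fin (m + 1) → ℝ) → (Fin (n + 1) → ℝ)) → Prop
  | refl (m : ℕ) : IsSPMComp m m id id
  | step {m n : ℕ} {H dH : (Fin (m + 1) → ℝ) → (Fin (n + 1) → ℝ)} (α : ℝ)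
      (hα : α ∈ Set.Ioo (0 : ℝ) 1) (σ : Equiv.Perm (Fin (n + 2)))
      (h : IsSPMComp m n H dH) :
      IsSPMComp m (n + 1) (fun p => sPatch n α σ (H p)) (fun X => sPatchD n α σ (dH X))

/-- `Q` is a Markov partition: each `Q i` is a probability measure on `Ω_{N+1}`
and the supports of the `Q i` are pairwise disjoint with union `Ω_{N+1}`. -/
def IsMarkovPartition {n N : ℕ} (Q : Fin (n + 1) → Fin (N + 1) → ℝ) : Prop :=
  (∀ i, (∀ I, 0 ≤ Q i I) ∧ ∑ I, Q i I = 1) ∧ (∀ I, ∃! i, Q i I ≠ 0)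

/-- The Markov embedding `F(p) = ∑_i p(i) Q_i` induced by `Q` (the same formula
gives its differential on tangent vectors). -/
def mEmb {n N : ℕ} (Q : Fin (n + 1) → Fin (N + 1) → ℝ) (p : Fin (n + 1) → ℝ) :
    Fin (N + 1) → ℝ := fun I => ∑ i, p i * Q i I

/-- `A_n^{λ,μ} = λ A_n^d + μ A_n^s`. -/
def Alm (n : ℕ) (lam mu : ℝ) (p X Y : Fin (n + 1) → ℝ) : ℝ :=
  lam * Ad n p X Y + mu * As n p X Y

/-!
With `α = (n+1)/(n+2)` the embedding `G_n^{α,σ}` fixes the uniform distribution and maps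
`e_a - e_b` to `α (e_{σ a} - e_{σ b})`. As the permutations act 2-transitively, invariance forces
all edge lengths `A_n(e_k - e_l, e_k - e_l)_{b_n}` (`k ≠ l`) to equal one number `κ_n`, with
`κ_{n+1} = ((n+2)/(n+1))² κ_n`, so `κ_n = ((n+1)/2)² κ_1`. A symmetric bilinear form all of whose
edge lengths equal `κ` is `κ/2` times the dot product on the sum-zero hyperplane, and
`Z_i^n ⬝ Z_j^n = δ_ij - 1/(n+1)`; both quantities therefore equal `κ_1/8`.
-/

namespace IsSymmBilin

variable {n : ℕ} {B : (Fin (n + 1) → ℝ) → (Fin (n + 1) → ℝ) → ℝ}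

theorem map_zero_left (hB : IsSymmBilin B) (Y : Fin (n + 1) → ℝ) : B 0 Y = 0 := by
  have h := hB.2 1 0 0 Y
  simp only [smul_zero, add_zero, one_mul] at h
  linarith

def toBilinForm (hB : IsSymmBilin B) : LinearMap.BilinForm ℝ (Fin (n + 1) → ℝ) :=
  LinearMap.mk₂ ℝ B
    (fun X X' Y => by simpa using hB.2 1 X X' Y)
    (fun c X Y => by simpa [hB.map_zero_left] using hB.2 c X 0 Y)
    (fun X Y Y' => by rw [hB.1 X, hB.1 X Y, hB.1 X Y']; simpa using hB.2 1 Y Y' X)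
    (fun c X Y => by rw [hB.1 X, hB.1 X Y]; simpa [hB.map_zero_left] using hB.2 c Y 0 X)

@[simp]
theorem toBilinForm_apply (hB : IsSymmBilin B) (X Y : Fin (n + 1) → ℝ) :
    hB.toBilinForm X Y = B X Y :=
  rfl

theorem apply_smul_smul (hB : IsSymmBilin B) (c : ℝ) (X Y : Fin (n + 1) → ℝ) :
    B (c • X) (c • Y) = c ^ 2 * B X Y := by
  rw [← hB.toBilinForm_apply]
  simp only [map_smul, LinearMap.smul_apply, toBilinForm_apply, smul_eq_mul]
  ring

theorem apply_eq_mul_dotProduct (hB : IsSymmBilin B) {κ : ℝ}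
    (hedge : ∀ k l : Fin (n + 1), k ≠ l →
      B (Pi.single k 1 - Pi.single l 1) (Pi.single k 1 - Pi.single l 1) = κ)
    {U V : Fin (n + 1) → ℝ} (hU : U ∈ Tang n) (hV : V ∈ Tang n) :
    B U V = κ / 2 * (U ⬝ᵥ V) := by
  set M := LinearMap.toMatrix₂' ℝ hB.toBilinForm
  -- Only the `κ / 2 * δ_kl` part survives on the sum-zero hyperplane.
  have hM : ∀ k l, M k l = (M k k + M l l - κ) / 2 + κ / 2 * (if k = l then 1 else 0) := by
    intro k l
    rcases eq_or_ne k l with rfl | hkl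
    · simp only [if_true]; ring
    have h := hedge k l hkl
    simp only [← hB.toBilinForm_apply, map_sub, LinearMap.sub_apply] at h
    simp only [M, LinearMap.toMatrix₂'_apply, toBilinForm_apply, if_neg hkl] at h ⊢
    rw [hB.1 (Pi.single l 1)] at h
    linarith
  rw [← hB.toBilinForm_apply, ← Matrix.toLinearMap₂'_toMatrix' (R := ℝ) hB.toBilinForm,
    Matrix.toLinearMap₂'_apply]
  have hU' : ∑ k, U k = 0 := hU
  have hV' : ∑ l, V l = 0 := hV
  calc ∑ k, ∑ l, U k • V l • M k l
      = ∑ k, ∑ l, (U k * M k k / 2 * V l + V l * M l l / 2 * U k - κ / 2 * U k * V l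
          + κ / 2 * (if k = l then U k * V l else 0)) := by
        refine sum_congr rfl fun k _ => sum_congr rfl fun l _ => ?_
        rw [hM k l, smul_eq_mul, smul_eq_mul]
        split_ifs <;> ring
    _ = κ / 2 * (U ⬝ᵥ V) := by
        simp only [sum_add_distrib, sum_sub_distrib, ← mul_sum, ← sum_mul, hU', hV',
          sum_ite_eq, mem_univ, if_true, dotProduct]
        ring

end IsSymmBilin

theorem bunif_mem_Psim {n : ℕ} (hn : 0 < n) : bunif n ∈ Psim n := by
  have hn' : (1 : ℝ) ≤ n := by exact_mod_cast hn
  refine ⟨fun _ => ⟨by unfold bunif; positivity, ?_⟩, ?_⟩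
  · rw [bunif, div_lt_one (by positivity)]
    linarith
  · simp only [bunif, sum_const, card_univ, Fintype.card_fin, nsmul_eq_mul]
    push_cast
    field_simp

theorem Zvec_mem_Tang (n : ℕ) (i : Fin (n + 1)) : Zvec n i ∈ Tang n := by
  show ∑ k, Zvec n i k = 0
  simp only [Zvec, sum_sub_distrib, sum_ite_eq', mem_univ, if_true,
    sum_const, card_univ, Fintype.card_fin, nsmul_eq_mul]
  push_cast
  field_simp
  ring

theorem Zvec_dotProduct_Zvec (n : ℕ) (i j : Fin (n + 1)) :
    Zvec n i ⬝ᵥ Zvec n j = (if i = j then 1 else 0) - 1 / (n + 1) := by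
  simp only [dotProduct, Zvec, sub_mul, mul_sub, ite_mul, one_mul, zero_mul, mul_ite, mul_one,
    mul_zero, sum_sub_distrib, sum_ite_eq', mem_univ, if_true, sum_const, card_univ,
    Fintype.card_fin, nsmul_eq_mul]
  push_cast
  rcases eq_or_ne i j with rfl | hij
  · simp only [if_true]
    field_simp
    ring
  · simp only [hij, hij.symm, if_false]
    field_simp
    ring

theorem sum_ite_perm_castSucc_eq {n : ℕ} (σ : Equiv.Perm (Fin (n + 2))) (I : Fin (n + 2)) :
    ∑ i : Fin (n + 1), (if σ i.castSucc = I then (1 : ℝ) else 0) =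
      1 - if σ (Fin.last (n + 1)) = I then 1 else 0 := by
  have h := Equiv.sum_comp σ fun J => if J = I then (1 : ℝ) else 0
  rw [Fin.sum_univ_castSucc, sum_ite_eq'] at h
  simp only [mem_univ, if_true] at h
  linarith

theorem sPatch_bunif (n : ℕ) (σ : Equiv.Perm (Fin (n + 2))) :
    sPatch n ((n + 1) / (n + 2)) σ (bunif n) = bunif (n + 1) := by
  funext I
  simp only [sPatch, bunif, ← mul_sum, sum_ite_perm_castSucc_eq]
  push_cast
  field_simp
  ring

theorem sPatchD_single_sub_single (n : ℕ) (α : ℝ) (σ : Equiv.Perm (Fin (n + 2)))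
    (a b : Fin (n + 1)) :
    sPatchD n α σ (Pi.single a 1 - Pi.single b 1) =
      α • (Pi.single (σ a.castSucc) 1 - Pi.single (σ b.castSucc) 1) := by
  funext I
  simp only [sPatchD, Pi.sub_apply, Pi.single_apply, sub_mul, ite_mul, one_mul, zero_mul,
    sum_sub_distrib, sum_ite_eq', mem_univ, if_true, Pi.smul_apply, smul_eq_mul, @eq_comm _ I]

theorem Equiv.Perm.exists_apply_eq_and_apply_eq {α : Type*} [DecidableEq α] {a b k l : α}
    (hab : a ≠ b) (hkl : k ≠ l) : ∃ σ : Equiv.Perm α, σ a = k ∧ σ b = l := by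
  refine ⟨(Equiv.swap a k).trans (Equiv.swap (Equiv.swap a k b) l), ?_, by simp⟩
  simp only [Equiv.trans_apply, Equiv.swap_apply_left]
  refine Equiv.swap_apply_of_ne_of_ne ?_ hkl
  exact fun h => hab ((Equiv.swap a k).injective ((Equiv.swap_apply_left a k).trans h))

theorem single_sub_single_mem_Tang {n : ℕ} (k l : Fin (n + 1)) :
    Pi.single k 1 - Pi.single l 1 ∈ Tang n := by
  show ∑ i, (Pi.single k (1 : ℝ) - Pi.single l 1 : Fin (n + 1) → ℝ) i = 0
  simp only [Pi.sub_apply, sum_sub_distrib, Finset.sum_pi_single', mem_univ, if_true, sub_self]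

def edgeSq (A : (n : ℕ) → (Fin (n + 1) → ℝ) → (Fin (n + 1) → ℝ) → (Fin (n + 1) → ℝ) → ℝ)
    (n : ℕ) (k l : Fin (n + 1)) : ℝ :=
  A n (bunif n) (Pi.single k 1 - Pi.single l 1) (Pi.single k 1 - Pi.single l 1)

section Invariant

variable {A : (n : ℕ) → (Fin (n + 1) → ℝ) → (Fin (n + 1) → ℝ) → (Fin (n + 1) → ℝ) → ℝ}

theorem edgeSq_comm (hsymm : SymmTF A) {n : ℕ} (hn : 0 < n) (k l : Fin (n + 1)) :
    edgeSq A n k l = edgeSq A n l k := by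
  have h := (hsymm n hn _ (bunif_mem_Psim hn)).apply_smul_smul (-1)
    (Pi.single l 1 - Pi.single k 1) (Pi.single l 1 - Pi.single k 1)
  rw [neg_one_smul, neg_sub, neg_one_sq, one_mul] at h
  exact h

theorem edgeSq_succ (hsymm : SymmTF A) (hinv : InvariantSP A) {n : ℕ} (hn : 0 < n)
    {a b : Fin (n + 1)} (hab : a ≠ b) {k l : Fin (n + 2)} (hkl : k ≠ l) :
    edgeSq A (n + 1) k l = ((n + 2) / (n + 1)) ^ 2 * edgeSq A n a b := by
  obtain ⟨σ, rfl, rfl⟩ :=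
    Equiv.Perm.exists_apply_eq_and_apply_eq (Fin.castSucc_injective _ |>.ne hab) hkl
  have hα : ((n : ℝ) + 1) / (n + 2) ∈ Set.Ioo (0 : ℝ) 1 :=
    ⟨by positivity, (div_lt_one (by positivity)).2 (by linarith)⟩
  have h := hinv n hn _ hα σ (bunif n) (bunif_mem_Psim hn) _ (single_sub_single_mem_Tang a b)
    _ (single_sub_single_mem_Tang a b)
  rw [sPatch_bunif, sPatchD_single_sub_single,
    (hsymm (n + 1) n.succ_pos _ (bunif_mem_Psim n.succ_pos)).apply_smul_smul] at h
  rw [edgeSq, edgeSq, ← h]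
  field_simp

theorem edgeSq_eq (hsymm : SymmTF A) (hinv : InvariantSP A) {n : ℕ} (hn : 0 < n)
    {k l : Fin (n + 1)} (hkl : k ≠ l) :
    edgeSq A n k l = ((n + 1) / 2) ^ 2 * edgeSq A 1 0 1 := by
  induction n, hn using Nat.le_induction with
  | base =>
    simp only [Nat.succ_eq_add_one, zero_add, Nat.cast_one, add_self_div_two, one_pow, one_mul]
    fin_cases k <;> fin_cases l
    exacts [(hkl rfl).elim, rfl, edgeSq_comm hsymm one_pos 1 0, (hkl rfl).elim]
  | succ n hn ih =>
    have h0 : (0 : Fin (n + 1)) ≠ Fin.last n := by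
      rw [Ne, Fin.ext_iff, Fin.val_last, Fin.val_zero]
      omega
    rw [edgeSq_succ hsymm hinv hn h0 hkl, ih h0]
    push_cast
    field_simp
    ring

theorem apply_bunif_Zvec_Zvec (hsymm : SymmTF A) (hinv : InvariantSP A) {n : ℕ} (hn : 0 < n)
    (i j : Fin (n + 1)) :
    A n (bunif n) (Zvec n i) (Zvec n j) =
      ((n + 1) / 2) ^ 2 * edgeSq A 1 0 1 / 2 * ((if i = j then 1 else 0) - 1 / (n + 1)) := by
  rw [(hsymm n hn _ (bunif_mem_Psim hn)).apply_eq_mul_dotProduct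
    (fun _ _ hkl => edgeSq_eq hsymm hinv hn hkl) (Zvec_mem_Tang n i) (Zvec_mem_Tang n j),
    Zvec_dotProduct_Zvec]

end Invariant

/-- For a family of symmetric `(0,2)`-tensor fields invariant under scalar
patched Markov embeddings, the quantities
`A_n(Z_i^n, Z_i^n)_{b_n}/(n(n+1))` and `-A_n(Z_i^n, Z_j^n)_{b_n}/(n+1)`
(`i ≠ j`) coincide and are independent of `n`, `i` and `j`. -/
theorem diag_offdiag_at_uniform
    (A : (n : ℕ) → (Fin (n + 1) → ℝ) → (Fin (n + 1) → ℝ) → (Fin (n + 1) → ℝ) → ℝ)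
    (hsymm : SymmTF A) (hinv : InvariantSP A) :
    ∃ c : ℝ, ∀ n : ℕ, 0 < n → ∀ i j : Fin (n + 1), i ≠ j →
      A n (bunif n) (Zvec n i) (Zvec n i) / ((n : ℝ) * ((n : ℝ) + 1)) = c ∧
      -(A n (bunif n) (Zvec n i) (Zvec n j)) / ((n : ℝ) + 1) = c := by
  refine ⟨edgeSq A 1 0 1 / 8, fun n hn i j hij => ?_⟩
  have hn' : (n : ℝ) ≠ 0 := by positivity
  rw [apply_bunif_Zvec_Zvec hsymm hinv hn, apply_bunif_Zvec_Zvec hsymm hinv hn, if_pos rfl,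
    if_neg hij]
  constructor <;> field_simp <;> ring
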